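/- arXiv:1212.5003 — 3 statements merged into one kernel-verified Lean document; each statement's English description precedes it below -/
import Mathlib

section
/- For every simple regular expression E over an alphabet α and every word w over α: w ∈ L(E) if and only if there exists F ∈ ∂_w(E) with ε ∈ L(F). -/
/-!
Antimirov's theorem: the partial derivatives of `E` by `a` decompose the left quotient,
`a⁻¹ L(E) = ⋃ F ∈ ∂ₐ(E), L(F)`. This follows by structural induction on `E` from the quotient
rules `a⁻¹(l + m) = a⁻¹l + a⁻¹m`, `a⁻¹(l m) = (a⁻¹l) m + [ε ∈ l] a⁻¹m` and `a⁻¹(l∗) = (a⁻¹l) l∗`,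
which mirror the defining clauses of `∂ₐ`. Iterating along `w` gives
`w⁻¹ L(E) = ⋃ F ∈ ∂_w(E), L(F)`, and `w ∈ L(E)` iff `ε ∈ w⁻¹ L(E)`.
-/

open scoped Classical

/-- The Antimirov partial derivative of a regular expression with respect to a symbol. -/
noncomputable def aderiv {α : Type*} (a : α) : RegularExpression α → Set (RegularExpression α)
  | .zero => ∅
  | .epsilon => ∅
  | .char b => if b = a then {1} else ∅
  | .plus E₁ E₂ => aderiv a E₁ ∪ aderiv a E₂
  | .comp E₁ E₂ =>
      if [] ∈ E₁.matches' then ((· * E₂) '' aderiv a E₁) ∪ aderiv a E₂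
      else (· * E₂) '' aderiv a E₁
  | .star E₁ => (· * E₁.star) '' aderiv a E₁

/-- Iterated Antimirov partial derivative with respect to a word. -/
noncomputable def aderivWord {α : Type*} : List α → RegularExpression α → Set (RegularExpression α)
  | [], E => {E}
  | a :: w, E => ⋃ F ∈ aderiv a E, aderivWord w F

/-- Left quotient of a language by a word. -/
def lquot {α : Type*} (w : List α) (L : Language α) : Language α := {v | w ++ v ∈ L}

open scoped Computability

section LeftQuotient

open Language

variable {α : Type*} (a : α) (w : List α) (l m : Language α)

theorem mem_lquot {v : List α} : v ∈ lquot w l ↔ w ++ v ∈ l := Iff.rfl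

theorem nil_mem_lquot_iff : [] ∈ lquot w l ↔ w ∈ l := by
  rw [mem_lquot, List.append_nil]

theorem lquot_nil : lquot [] l = l := rfl

theorem lquot_cons : lquot (a :: w) l = lquot w (lquot [a] l) := rfl

theorem lquot_mono {l m : Language α} (h : l ≤ m) : lquot w l ≤ lquot w m :=
  fun _ hv => h hv

theorem lquot_add : lquot w (l + m) = lquot w l + lquot w m := rfl

theorem lquot_iSup {ι : Sort*} (l : ι → Language α) : lquot w (⨆ i, l i) = ⨆ i, lquot w (l i) := by
  ext v
  simp only [mem_lquot, mem_iSup]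

theorem lquot_singleton_zero : lquot [a] (0 : Language α) = 0 := rfl

theorem lquot_singleton_one : lquot [a] (1 : Language α) = 0 := by
  ext v
  simp [mem_lquot, mem_one, notMem_zero]

theorem lquot_singleton_singleton (b : α) :
    lquot [a] ({[b]} : Language α) = if b = a then 1 else 0 := by
  ext v
  change a :: v = [b] ↔ v ∈ (if b = a then 1 else 0 : Language α)
  split_ifs with h
  · simp [h, mem_one]
  · simp [Ne.symm h, notMem_zero]

theorem lquot_singleton_mul :
    lquot [a] (l * m) = lquot [a] l * m + if [] ∈ l then lquot [a] m else 0 := by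
  ext v
  simp only [mem_add, mem_lquot, mem_mul, List.singleton_append]
  constructor
  · rintro ⟨_ | ⟨b, s⟩, hs, t, ht, hst⟩
    · right
      rw [List.nil_append] at hst
      subst hst
      rwa [if_pos hs]
    · obtain ⟨rfl, rfl⟩ := List.cons_eq_cons.mp hst
      exact Or.inl ⟨s, hs, t, ht, rfl⟩
  · rintro (⟨s, hs, t, ht, rfl⟩ | h)
    · exact ⟨a :: s, hs, t, ht, rfl⟩
    · split_ifs at h with hl
      · exact ⟨[], hl, a :: v, h, rfl⟩
      · exact absurd h (notMem_zero v)

/-- Going through the powers avoids the circular unfolding `l∗ = 1 + l * l∗` when `[] ∈ l`. -/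
theorem lquot_singleton_pow_le_mul_kstar (n : ℕ) : lquot [a] (l ^ n) ≤ lquot [a] l * l∗ := by
  induction n with
  | zero => simp [lquot_singleton_one]
  | succ n ih =>
    rw [pow_succ', lquot_singleton_mul]
    refine sup_le (mul_le_mul_right pow_le_kstar _) ?_
    split_ifs
    exacts [ih, bot_le]

theorem lquot_singleton_kstar : lquot [a] l∗ = lquot [a] l * l∗ := by
  refine le_antisymm ?_ ?_
  · rw [kstar_eq_iSup_pow l, lquot_iSup, ← kstar_eq_iSup_pow]
    exact iSup_le (lquot_singleton_pow_le_mul_kstar a l)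
  · calc lquot [a] l * l∗ ≤ lquot [a] (l * l∗) := by
          rw [lquot_singleton_mul]; exact le_add_right le_rfl
      _ ≤ lquot [a] l∗ := lquot_mono _ mul_kstar_le_kstar

end LeftQuotient

namespace RegularExpression

variable {α : Type*}

def setMatches (S : Set (RegularExpression α)) : Language α := ⨆ F ∈ S, F.matches'

theorem mem_setMatches {S : Set (RegularExpression α)} {x : List α} :
    x ∈ setMatches S ↔ ∃ F ∈ S, x ∈ F.matches' := by
  simp only [setMatches, Language.mem_iSup, exists_prop]

theorem setMatches_empty : setMatches (∅ : Set (RegularExpression α)) = 0 := by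
  simp only [setMatches, Set.mem_empty_iff_false, iSup_false, iSup_bot]
  rfl

theorem setMatches_singleton (F : RegularExpression α) : setMatches {F} = F.matches' := by
  simp [setMatches]

theorem setMatches_union (S T : Set (RegularExpression α)) :
    setMatches (S ∪ T) = setMatches S + setMatches T := by
  simp only [setMatches, iSup_union]
  rfl

theorem setMatches_image_mul (S : Set (RegularExpression α)) (G : RegularExpression α) :
    setMatches ((· * G) '' S) = setMatches S * G.matches' := by
  simp only [setMatches, iSup_image, matches'_mul, Language.iSup_mul]

theorem setMatches_biUnion {ι : Type*} (S : Set ι) (T : ι → Set (RegularExpression α)) :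
    setMatches (⋃ i ∈ S, T i) = ⨆ i ∈ S, setMatches (T i) := by
  simp only [setMatches, iSup_iUnion]

theorem lquot_singleton_matches' (a : α) (E : RegularExpression α) :
    lquot [a] E.matches' = setMatches (aderiv a E) := by
  induction E with
  | zero => simp [aderiv, setMatches_empty, lquot_singleton_zero]
  | epsilon => simp [aderiv, setMatches_empty, lquot_singleton_one]
  | char b =>
    rw [matches'_char, lquot_singleton_singleton, aderiv]
    split_ifs
    · rw [setMatches_singleton, matches'_epsilon]
    · rw [setMatches_empty]
  | plus E₁ E₂ ih₁ ih₂ =>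
    rw [plus_def, matches'_add, lquot_add, ih₁, ih₂, ← setMatches_union]
    rfl
  | comp E₁ E₂ ih₁ ih₂ =>
    rw [comp_def, matches'_mul, lquot_singleton_mul, ih₁, ih₂, ← comp_def, aderiv]
    split_ifs
    · rw [setMatches_union, setMatches_image_mul]
    · rw [setMatches_image_mul, add_zero]
  | star E ih =>
    rw [matches'_star, lquot_singleton_kstar, ih, aderiv, setMatches_image_mul,
      matches'_star]

theorem lquot_matches' (w : List α) (E : RegularExpression α) :
    lquot w E.matches' = setMatches (aderivWord w E) := by
  induction w generalizing E with
  | nil => rw [lquot_nil, aderivWord, setMatches_singleton]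
  | cons a w ih =>
    rw [lquot_cons, lquot_singleton_matches', aderivWord, setMatches_biUnion, setMatches]
    simp only [lquot_iSup, ih]

end RegularExpression

theorem antimirov_membership {α : Type*} (w : List α) (E : RegularExpression α) :
    w ∈ E.matches' ↔ ∃ F ∈ aderivWord w E, [] ∈ F.matches' := by
  rw [← nil_mem_lquot_iff, RegularExpression.lquot_matches',
    RegularExpression.mem_setMatches]
end

section
/- For every simple regular expression E₁ over an alphabet α and every nonempty word w over α: ∂_w(E₁*) ⊆ ⋃_{v} ∂_v(E₁)⊙E₁*, where v ranges over the nonempty suffixes of w and 𝒮⊙F = {G·F | G ∈ 𝒮}. -/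
open scoped Classical

/-!
Since `∂ₐ(E*) = ∂ₐ(E)⊙E*`, every element of `∂_{aw}(E*)` lies in `∂_w(G·E*)` for some `G ∈ ∂ₐ(E)`.
By the product rule for words, such a derivative either still has the shape `H·E*` with
`H ∈ ∂_w(G) ⊆ ∂_{aw}(E)`, or it is a derivative of `E*` by a nonempty suffix of `w`; in the
latter case induction on the length of the word applies, and suffixes of suffixes are suffixes.
-/

section

variable {α : Type*}

lemma mem_aderivWord_cons {a : α} {w : List α} {E x : RegularExpression α} :
    x ∈ aderivWord (a :: w) E ↔ ∃ F ∈ aderiv a E, x ∈ aderivWord w F := by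
  simp only [aderivWord, Set.mem_iUnion, exists_prop]

lemma aderiv_mul_subset (a : α) (G F : RegularExpression α) :
    aderiv a (G * F) ⊆ (· * F) '' aderiv a G ∪ aderiv a F := by
  change aderiv a (G.comp F) ⊆ _
  rw [aderiv]
  split_ifs
  · exact subset_rfl
  · exact Set.subset_union_left

lemma aderivWord_mul_subset (w : List α) (G F : RegularExpression α) :
    aderivWord w (G * F) ⊆
      (· * F) '' aderivWord w G ∪ ⋃ v ∈ {v : List α | v ≠ [] ∧ v <:+ w}, aderivWord v F := by
  induction w generalizing G with
  | nil =>
    rintro x rfl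
    exact Or.inl ⟨G, rfl, rfl⟩
  | cons a w ih =>
    intro x hx
    obtain ⟨y, hy, hx⟩ := mem_aderivWord_cons.1 hx
    rcases aderiv_mul_subset a G F hy with ⟨H, hH, rfl⟩ | hyF
    · rcases ih H hx with ⟨K, hK, rfl⟩ | hsuf
      · exact Or.inl ⟨K, mem_aderivWord_cons.2 ⟨H, hH, hK⟩, rfl⟩
      · obtain ⟨v, ⟨hv, hvw⟩, hxv⟩ := Set.mem_iUnion₂.1 hsuf
        exact Or.inr (Set.mem_iUnion₂.2 ⟨v, ⟨hv, hvw.trans (List.suffix_cons a w)⟩, hxv⟩)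
    · exact Or.inr (Set.mem_iUnion₂.2
        ⟨a :: w, ⟨List.cons_ne_nil a w, List.suffix_refl _⟩, mem_aderivWord_cons.2 ⟨y, hyF, hx⟩⟩)

end

theorem antimirov_star_subset {α : Type*} (E₁ : RegularExpression α) (a : α) (w : List α) :
    aderivWord (a :: w) E₁.star ⊆
      ⋃ v ∈ {v : List α | v ≠ [] ∧ v <:+ a :: w}, (· * E₁.star) '' aderivWord v E₁ := by
  intro x hx
  obtain ⟨_, ⟨G, hG, rfl⟩, hx⟩ := mem_aderivWord_cons.1 hx
  rcases aderivWord_mul_subset w G E₁.star hx with ⟨H, hH, rfl⟩ | hsuf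
  · exact Set.mem_iUnion₂.2 ⟨a :: w, ⟨List.cons_ne_nil a w, List.suffix_refl _⟩,
      H, mem_aderivWord_cons.2 ⟨G, hG, hH⟩, rfl⟩
  · obtain ⟨_ | ⟨b, v⟩, ⟨hv, hvw⟩, hxv⟩ := Set.mem_iUnion₂.1 hsuf
    · exact absurd rfl hv
    have : v.length < w.length := by simpa using hvw.length_le
    obtain ⟨u, ⟨hu, hub⟩, hxu⟩ := Set.mem_iUnion₂.1 (antimirov_star_subset E₁ b v hxv)
    exact Set.mem_iUnion₂.2 ⟨u, ⟨hu, (hub.trans hvw).trans (List.suffix_cons a w)⟩, hxu⟩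
termination_by w.length
end

section
/- For all simple regular expressions E₁, E₂ over an alphabet α, the number of distinct sets ∂_w(E₁·E₂) for w ranging over nonempty words over α is at most the number of distinct sets ∂_w(E₁) multiplied by 2 raised to the number of distinct sets ∂_w(E₂) (for w ranging over nonempty words over α). -/
/-!
Every partial derivative of `E₁ · E₂` by a word `w` is of the form `(∂_w E₁) ⊙ E₂ ∪ ⋃ 𝒞`, where
`𝒞` is a collection of sets `∂_v E₂` for nonempty suffixes `v` of `w`. Hence the derivative
sets of `E₁ · E₂` by nonempty words are images of pairs (a derivative set of `E₁`, a collection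
of derivative sets of `E₂`), and there are at most `#𝒜₁ * 2 ^ #𝒜₂` such pairs, where `𝒜ᵢ` is
the family of derivative sets of `Eᵢ` by nonempty words. Finiteness of the
counts comes from Antimirov's finite set `PD⁺(E)` of expressions, closed under `∂ₐ`, that
contains all partial derivatives by nonempty words.
-/

open scoped Classical

lemma Set.ncard_image2_le {α β γ : Type*} (f : α → β → γ) {s : Set α} {t : Set β}
    (hs : s.Finite) (ht : t.Finite) : (Set.image2 f s t).ncard ≤ s.ncard * t.ncard := by
  rw [← Set.image_uncurry_prod, ← Set.ncard_prod]
  exact Set.ncard_image_le (hs.prod ht)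

namespace RegularExpression

variable {α : Type*}

def aderivWordSets (E : RegularExpression α) : Set (Set (RegularExpression α)) :=
  {S | ∃ (a : α) (w : List α), S = aderivWord (a :: w) E}

/-- Antimirov's `PD⁺(E)`. -/
def aderivClosure : RegularExpression α → Set (RegularExpression α)
  | zero => ∅
  | epsilon => ∅
  | char _ => {1}
  | plus E₁ E₂ => aderivClosure E₁ ∪ aderivClosure E₂
  | comp E₁ E₂ => (· * E₂) '' aderivClosure E₁ ∪ aderivClosure E₂
  | star E => (· * E.star) '' aderivClosure E

lemma aderivWord_cons (a : α) (w : List α) (E : RegularExpression α) :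
    aderivWord (a :: w) E = ⋃ F ∈ aderiv a E, aderivWord w F := rfl

lemma aderiv_mul_of_nil_mem {E F : RegularExpression α} (h : [] ∈ E.matches') (a : α) :
    aderiv a (E * F) = (· * F) '' aderiv a E ∪ aderiv a F :=
  if_pos h

lemma aderiv_mul_of_nil_notMem {E F : RegularExpression α} (h : [] ∉ E.matches') (a : α) :
    aderiv a (E * F) = (· * F) '' aderiv a E :=
  if_neg h

lemma aderiv_mul_subset (a : α) (E F : RegularExpression α) :
    aderiv a (E * F) ⊆ (· * F) '' aderiv a E ∪ aderiv a F := by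
  by_cases h : [] ∈ E.matches'
  · rw [aderiv_mul_of_nil_mem h]
  · rw [aderiv_mul_of_nil_notMem h]
    exact Set.subset_union_left

lemma aderivClosure_finite (E : RegularExpression α) : (aderivClosure E).Finite := by
  induction E with
  | zero | epsilon => exact Set.finite_empty
  | char _ => exact Set.finite_singleton _
  | plus _ _ ih₁ ih₂ => exact ih₁.union ih₂
  | comp _ _ ih₁ ih₂ => exact (ih₁.image _).union ih₂
  | star _ ih => exact ih.image _

lemma aderiv_subset_aderivClosure (a : α) (E : RegularExpression α) :
    aderiv a E ⊆ aderivClosure E := by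
  induction E with
  | zero | epsilon => exact Set.empty_subset _
  | char b =>
    show (if b = a then ({1} : Set (RegularExpression α)) else ∅) ⊆ _
    split_ifs
    exacts [subset_rfl, Set.empty_subset _]
  | plus _ _ ih₁ ih₂ => exact Set.union_subset_union ih₁ ih₂
  | comp _ _ ih₁ ih₂ =>
    exact (aderiv_mul_subset _ _ _).trans (Set.union_subset_union (Set.image_mono ih₁) ih₂)
  | star _ ih => exact Set.image_mono ih

lemma aderiv_subset_aderivClosure_of_mem {E G : RegularExpression α}
    (hG : G ∈ aderivClosure E) (a : α) : aderiv a G ⊆ aderivClosure E := by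
  induction E generalizing G with
  | zero | epsilon => exact absurd hG (Set.notMem_empty _)
  | char b =>
    rw [Set.mem_singleton_iff.mp hG]
    exact Set.empty_subset _
  | plus _ _ ih₁ ih₂ =>
    rcases hG with hG | hG
    · exact (ih₁ hG).trans Set.subset_union_left
    · exact (ih₂ hG).trans Set.subset_union_right
  | comp _ E₂ ih₁ ih₂ =>
    rcases hG with ⟨G', hG', rfl⟩ | hG
    · exact (aderiv_mul_subset _ _ _).trans <| Set.union_subset_union
        (Set.image_mono (ih₁ hG')) (aderiv_subset_aderivClosure a E₂)
    · exact (ih₂ hG).trans Set.subset_union_right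
  | star E ih =>
    obtain ⟨G', hG', rfl⟩ := hG
    refine (aderiv_mul_subset _ _ _).trans (Set.union_subset (Set.image_mono (ih hG')) ?_)
    exact Set.image_mono (aderiv_subset_aderivClosure a E)

lemma aderivWord_subset_aderivClosure_of_mem {E G : RegularExpression α}
    (hG : G ∈ aderivClosure E) (w : List α) : aderivWord w G ⊆ aderivClosure E := by
  induction w generalizing G with
  | nil => exact Set.singleton_subset_iff.mpr hG
  | cons a w ih =>
    exact Set.iUnion₂_subset fun F hF => ih (aderiv_subset_aderivClosure_of_mem hG a hF)

lemma aderivWord_cons_subset_aderivClosure (a : α) (w : List α) (E : RegularExpression α) :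
    aderivWord (a :: w) E ⊆ aderivClosure E :=
  Set.iUnion₂_subset fun _ hF =>
    aderivWord_subset_aderivClosure_of_mem (aderiv_subset_aderivClosure a E hF) w

lemma aderivWordSets_finite (E : RegularExpression α) : (aderivWordSets E).Finite :=
  (aderivClosure_finite E).finite_subsets.subset <| by
    rintro _ ⟨a, w, rfl⟩
    exact aderivWord_cons_subset_aderivClosure a w E

lemma exists_aderivWord_mul_eq (E₂ : RegularExpression α) (w : List α)
    (G : RegularExpression α) : ∃ 𝒞 ⊆ aderivWordSets E₂,
      aderivWord w (G * E₂) = (· * E₂) '' aderivWord w G ∪ ⋃₀ 𝒞 := by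
  induction w generalizing G with
  | nil => exact ⟨∅, Set.empty_subset _, by simp [aderivWord]⟩
  | cons a w ih =>
    choose 𝒞 h𝒞 hdecomp using ih
    have hleft : ⋃ F ∈ (· * E₂) '' aderiv a G, aderivWord w F =
        (· * E₂) '' aderivWord (a :: w) G ∪ ⋃₀ ⋃ G' ∈ aderiv a G, 𝒞 G' := by
      simp_rw [Set.biUnion_image, hdecomp, Set.iUnion_union_distrib, aderivWord_cons,
        Set.image_iUnion₂, Set.sUnion_iUnion]
    have h𝒞' : ⋃ G' ∈ aderiv a G, 𝒞 G' ⊆ aderivWordSets E₂ :=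
      Set.iUnion₂_subset fun G' _ => h𝒞 G'
    by_cases h : [] ∈ G.matches'
    · -- the derivatives entering through `E₂` contribute the single set `∂_{a w} E₂`
      refine ⟨(⋃ G' ∈ aderiv a G, 𝒞 G') ∪ {aderivWord (a :: w) E₂},
        Set.union_subset h𝒞' (Set.singleton_subset_iff.mpr ⟨a, w, rfl⟩), ?_⟩
      rw [aderivWord_cons, aderiv_mul_of_nil_mem h, Set.biUnion_union, hleft,
        ← aderivWord_cons, Set.sUnion_union, Set.sUnion_singleton, Set.union_assoc]
    · exact ⟨_, h𝒞', by rw [aderivWord_cons, aderiv_mul_of_nil_notMem h, hleft]⟩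

lemma aderivWordSets_mul_subset (E₁ E₂ : RegularExpression α) :
    aderivWordSets (E₁ * E₂) ⊆
      Set.image2 (fun A 𝒞 => (· * E₂) '' A ∪ ⋃₀ 𝒞) (aderivWordSets E₁) (𝒫 aderivWordSets E₂) := by
  rintro _ ⟨a, w, rfl⟩
  obtain ⟨𝒞, h𝒞, hdecomp⟩ := exists_aderivWord_mul_eq E₂ (a :: w) E₁
  exact ⟨_, ⟨a, w, rfl⟩, 𝒞, h𝒞, hdecomp.symm⟩

end RegularExpression

theorem antimirov_comp_card {α : Type*} (E₁ E₂ : RegularExpression α) :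
    {S | ∃ (a : α) (w : List α), S = aderivWord (a :: w) (E₁ * E₂)}.ncard ≤
      {S | ∃ (a : α) (w : List α), S = aderivWord (a :: w) E₁}.ncard *
        2 ^ {S | ∃ (a : α) (w : List α), S = aderivWord (a :: w) E₂}.ncard := by
  have hA := E₁.aderivWordSets_finite
  have hB := E₂.aderivWordSets_finite
  calc (E₁ * E₂).aderivWordSets.ncard
      ≤ (Set.image2 (fun A 𝒞 => (· * E₂) '' A ∪ ⋃₀ 𝒞)
          E₁.aderivWordSets (𝒫 E₂.aderivWordSets)).ncard :=
        Set.ncard_le_ncard (E₁.aderivWordSets_mul_subset E₂) (hA.image2 _ hB.powerset)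
    _ ≤ E₁.aderivWordSets.ncard * (𝒫 E₂.aderivWordSets).ncard :=
        Set.ncard_image2_le _ hA hB.powerset
    _ = E₁.aderivWordSets.ncard * 2 ^ E₂.aderivWordSets.ncard := by
        rw [Set.ncard_powerset _ hB]
end
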